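/- Let d ≥ 3 be an integer and p a prime number. Let F = (F₁, F₂, F₃) ∈ ℚ[x,y,z]³ be the triple of homogeneous polynomials of degree d given by F₁ = x^d − p^{−(d−3)} y² z^{d−2}, F₂ = x y² z^{d−3}, F₃ = y² z^{d−2}, and for n ≥ 1 let F^{(n)} be the triple of homogeneous polynomials of degree d^n obtained by substituting F into itself n times (F^{(1)} = F, F^{(n+1)} = F^{(n)} ∘ F). Then for every n ≥ 1 the three components of F^{(n)} have no nonconstant common divisor in ℚ[x,y,z]. (This expresses that the rational self-map of ℙ² defined by F is algebraically stable, so that its first dynamical degree equals d.) -/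

import Mathlib

open MvPolynomial

/-- The homogeneous degree-`d` forms defining the rational self-map `f_{d,p}` of `ℙ²`:
`F₁ = x^d - p^{-(d-3)} y² z^{d-2}`, `F₂ = x y² z^{d-3}`, `F₃ = y² z^{d-2}`. -/
noncomputable def Fdp (d p : ℕ) : Fin 3 → MvPolynomial (Fin 3) ℚ :=
  ![X 0 ^ d - C (((p : ℚ) ^ (d - 3))⁻¹) * X 1 ^ 2 * X 2 ^ (d - 2),
    X 0 * X 1 ^ 2 * X 2 ^ (d - 3),
    X 1 ^ 2 * X 2 ^ (d - 2)]

/-- The triple of homogeneous forms of the `n`-th substitution iterate `F^{(n)}`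
(`F^{(0)}` is the identity triple, `F^{(n+1)} = F^{(n)} ∘ F`). -/
noncomputable def FdpIter (d p : ℕ) : ℕ → Fin 3 → MvPolynomial (Fin 3) ℚ
  | 0 => fun i => X i
  | n + 1 => fun i => bind₁ (Fdp d p) (FdpIter d p n i)

/-!
Let `J_n` be the radical of the ideal generated by the components of `F^{(n)}`, and write
`v = y² z^{d-2}`, `c = p^{-(d-3)} ≠ 0`. If `x, yz ∈ J_n`, pulling back along `F` gives
`F₁ = x^d - c v ∈ J_{n+1}` and `F₂ F₃ ∈ J_{n+1}`. As `(x v)²` is a multiple of `F₂ F₃`, also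
`x v ∈ J_{n+1}`; then `x^{d+1} = x F₁ + c x v` gives `x ∈ J_{n+1}`, hence `v ∈ J_{n+1}` and
`yz ∈ J_{n+1}`. So a common divisor of the components of `F^{(n)}` divides a power of `x` and a
power of `yz`, which are coprime: it is a unit, i.e. a nonzero constant.
-/

theorem MvPolynomial.isRelPrime_X_X_mul_X {σ R : Type*} [CommRing R] [IsDomain R]
    {i j k : σ} (hij : i ≠ j) (hik : i ≠ k) :
    IsRelPrime (X i : MvPolynomial σ R) (X j * X k) :=
  X_prime.irreducible.isRelPrime_iff_not_dvd.mpr (by simp [X_dvd_mul_iff, hij, hik])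

theorem Ideal.IsRadical.mem_of_pow_sub_mem_of_mul_mem {R : Type*} [CommRing R] {J : Ideal R}
    (hJ : J.IsRadical) {u v c : R} (hc : IsUnit c) {m : ℕ} (hm : m ≠ 0)
    (hsub : u ^ m - c * v ∈ J) (hmul : u * v ∈ J) : u ∈ J ∧ v ∈ J := by
  have hu : u ∈ J := hJ ⟨m + 1, by
    rw [show u ^ (m + 1) = u * (u ^ m - c * v) + c * (u * v) by ring]
    exact J.add_mem (J.mul_mem_left _ hsub) (J.mul_mem_left _ hmul)⟩
  refine ⟨hu, (J.unit_mul_mem_iff_mem hc).mp ?_⟩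
  rw [show c * v = u ^ m - (u ^ m - c * v) by ring]
  exact J.sub_mem (J.pow_mem_of_mem hu m (Nat.pos_of_ne_zero hm)) hsub

theorem Fdp_add_three (e p : ℕ) :
    Fdp (e + 3) p =
      ![X 0 ^ (e + 3) - C (((p : ℚ) ^ e)⁻¹) * (X 1 ^ 2 * X 2 ^ (e + 1)),
        X 0 * X 1 ^ 2 * X 2 ^ e,
        X 1 ^ 2 * X 2 ^ (e + 1)] := by
  simp only [Fdp, Nat.add_sub_cancel, show e + 3 - 2 = e + 1 by omega, mul_assoc]

theorem span_range_FdpIter_succ (d p n : ℕ) :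
    Ideal.span (Set.range (FdpIter d p (n + 1))) =
      (Ideal.span (Set.range (FdpIter d p n))).map (bind₁ (Fdp d p)) := by
  rw [Ideal.map_span, ← Set.range_comp]
  rfl

theorem radical_map_bind₁_Fdp {e p : ℕ} (hp : (p : ℚ) ≠ 0) {I : Ideal (MvPolynomial (Fin 3) ℚ)}
    (h₀ : X 0 ∈ I.radical) (h₁₂ : X 1 * X 2 ∈ I.radical) :
    X 0 ∈ (I.map (bind₁ (Fdp (e + 3) p))).radical ∧
      X 1 * X 2 ∈ (I.map (bind₁ (Fdp (e + 3) p))).radical := by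
  set J := (I.map (bind₁ (Fdp (e + 3) p))).radical
  have hmap : ∀ a ∈ I.radical, bind₁ (Fdp (e + 3) p) a ∈ J := fun a ha =>
    Ideal.map_radical_le _ (Ideal.mem_map_of_mem _ ha)
  have hsub : X 0 ^ (e + 3) - C (((p : ℚ) ^ e)⁻¹) * (X 1 ^ 2 * X 2 ^ (e + 1)) ∈ J := by
    simpa [Fdp_add_three] using hmap _ h₀
  have hprod : X 0 * X 1 ^ 2 * X 2 ^ e * (X 1 ^ 2 * X 2 ^ (e + 1)) ∈ J := by
    simpa [Fdp_add_three] using hmap _ h₁₂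
  have hmul : X 0 * (X 1 ^ 2 * X 2 ^ (e + 1)) ∈ J := Ideal.radical_isRadical _ ⟨2, by
    rw [show (X 0 * (X 1 ^ 2 * X 2 ^ (e + 1)) : MvPolynomial (Fin 3) ℚ) ^ 2 =
      X 0 * X 1 ^ 2 * X 2 ^ e * (X 1 ^ 2 * X 2 ^ (e + 1)) * (X 0 * X 2) by ring]
    exact J.mul_mem_right _ hprod⟩
  obtain ⟨hx, hv⟩ := (Ideal.radical_isRadical _).mem_of_pow_sub_mem_of_mul_mem
    ((inv_ne_zero (pow_ne_zero e hp)).isUnit.map C) (by omega) hsub hmul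
  refine ⟨hx, Ideal.radical_isRadical _ ⟨e + 2, ?_⟩⟩
  rw [show (X 1 * X 2 : MvPolynomial (Fin 3) ℚ) ^ (e + 2) =
    X 1 ^ 2 * X 2 ^ (e + 1) * (X 1 ^ e * X 2) by ring]
  exact J.mul_mem_right _ hv

theorem radical_span_range_FdpIter {e p : ℕ} (hp : (p : ℚ) ≠ 0) (n : ℕ) :
    X 0 ∈ (Ideal.span (Set.range (FdpIter (e + 3) p n))).radical ∧
      X 1 * X 2 ∈ (Ideal.span (Set.range (FdpIter (e + 3) p n))).radical := by
  induction n with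
  | zero =>
    have hX (i : Fin 3) : X i ∈ (Ideal.span (Set.range (FdpIter (e + 3) p 0))).radical :=
      Ideal.le_radical (Ideal.subset_span ⟨i, rfl⟩)
    exact ⟨hX 0, Ideal.mul_mem_left _ _ (hX 2)⟩
  | succ n ih =>
    rw [span_range_FdpIter_succ]
    exact radical_map_bind₁_Fdp hp ih.1 ih.2

theorem stmt14_general (d p : ℕ) (hd : 3 ≤ d) (hp : p.Prime) (n : ℕ)
    (q : MvPolynomial (Fin 3) ℚ) (hq : ∀ i, q ∣ FdpIter d p n i) :
    ∃ a : ℚ, q = C a := by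
  obtain ⟨e, rfl⟩ : ∃ e, d = e + 3 := ⟨d - 3, by omega⟩
  have hle : Ideal.span (Set.range (FdpIter (e + 3) p n)) ≤ Ideal.span {q} :=
    Ideal.span_le.mpr (Set.range_subset_iff.mpr fun i => Ideal.mem_span_singleton.mpr (hq i))
  obtain ⟨hx, hyz⟩ := radical_span_range_FdpIter (e := e) (Nat.cast_ne_zero.mpr hp.ne_zero) n
  obtain ⟨k, hk⟩ := Ideal.radical_mono hle hx
  obtain ⟨j, hj⟩ := Ideal.radical_mono hle hyz
  have hunit : IsUnit q := (isRelPrime_X_X_mul_X (R := ℚ) (by decide) (by decide)).pow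
    (Ideal.mem_span_singleton.mp hk) (Ideal.mem_span_singleton.mp hj)
  obtain ⟨a, -, rfl⟩ := isUnit_iff_eq_C_of_isReduced.mp hunit
  exact ⟨a, rfl⟩

/-- For `d ≥ 3`, `p` prime and every `n ≥ 1`, the three components of `F^{(n)}` have no
nonconstant common divisor in `ℚ[x,y,z]` (algebraic stability of `f_{d,p}`). -/
theorem stmt14 (d p : ℕ) (hd : 3 ≤ d) (hp : p.Prime) (n : ℕ) (hn : 1 ≤ n)
    (q : MvPolynomial (Fin 3) ℚ) (hq : ∀ i, q ∣ FdpIter d p n i) :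
    ∃ a : ℚ, q = C a :=
  stmt14_general d p hd hp n q hq
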